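/- For nonnegative vectors x, y of length n with nonincreasing components, x ≺ y if and only if there exists an upper triangular row-stochastic matrix U such that x = yU. -/

import Mathlib

open Finset Matrix

/-- Prefix sum of the first `k` components. -/
def psum {n : ℕ} (x : Fin n → ℝ) (k : ℕ) : ℝ :=
  ∑ i ∈ Finset.filter (fun i : Fin n => (i : ℕ) < k) Finset.univ, x i

/-- `x` is majorized by `y` (both assumed sorted nonincreasingly). -/
def Maj {n : ℕ} (x y : Fin n → ℝ) : Prop :=
  (∀ k, k < n → psum x k ≤ psum y k) ∧ (∑ i, x i) = ∑ i, y i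

/-- An A-transform: for `i < j` and `λ ∈ [0,1]`, replace `x i` by `x i + λ * x j`
and `x j` by `(1 - λ) * x j`. -/
def ATrans {n : ℕ} (x x' : Fin n → ℝ) : Prop :=
  ∃ (i j : Fin n) (lam : ℝ), i < j ∧ 0 ≤ lam ∧ lam ≤ 1 ∧
    x' = Function.update (Function.update x i (x i + lam * x j)) j ((1 - lam) * x j)

/-- A B-transform: for `i < j` and `λ ∈ [0,1]`, replace `y i` by `(1 - λ) * y i`
and `y j` by `y j + λ * y i`. -/
def BTrans {n : ℕ} (y y' : Fin n → ℝ) : Prop :=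
  ∃ (i j : Fin n) (lam : ℝ), i < j ∧ 0 ≤ lam ∧ lam ≤ 1 ∧
    y' = Function.update (Function.update y i ((1 - lam) * y i)) j (y j + lam * y i)

/-- Lower triangular row-stochastic matrix. -/
def LowerRS {n : ℕ} (L : Matrix (Fin n) (Fin n) ℝ) : Prop :=
  (∀ i j, 0 ≤ L i j) ∧ (∀ i j : Fin n, i < j → L i j = 0) ∧ (∀ i, ∑ j, L i j = 1)

/-- Upper triangular row-stochastic matrix. -/
def UpperRS {n : ℕ} (U : Matrix (Fin n) (Fin n) ℝ) : Prop :=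
  (∀ i j, 0 ≤ U i j) ∧ (∀ i j : Fin n, j < i → U i j = 0) ∧ (∀ i, ∑ j, U i j = 1)

/-! Write `X k`, `Y k` for the prefix sums of `x`, `y`. The mass `y i` occupies the interval
`[Y i, Y (i+1)]` and `x j` the interval `[X j, X (j+1)]`; both families tile `[0, Y n]`.
Sending from `y i` to `x j` the length of the overlap of their intervals gives a transport plan
with row sums `y` and column sums `x`, and `X (j+1) ≤ Y (j+1) ≤ Y i` for `j < i` makes it upper
triangular. Dividing row `i` by `y i` yields `U`. Conversely, an upper triangular `U` only moves
mass to later positions, which cannot increase prefix sums. -/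

def overlap (a b c d : ℝ) : ℝ := max 0 (min b d - max a c)

section Overlap

variable {a b c d : ℝ}

lemma overlap_nonneg : 0 ≤ overlap a b c d := le_max_left _ _

lemma overlap_comm : overlap a b c d = overlap c d a b := by
  rw [overlap, overlap, min_comm, max_comm a]

lemma overlap_le_sub (hab : a ≤ b) : overlap a b c d ≤ b - a :=
  max_le (sub_nonneg.2 hab) (sub_le_sub (min_le_left _ _) (le_max_left _ _))

lemma overlap_eq_zero_of_le (hda : d ≤ a) : overlap a b c d = 0 :=
  max_eq_left (sub_nonpos.2 ((min_le_right _ _).trans (hda.trans (le_max_left _ _))))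

lemma overlap_eq_sub_clamp (hab : a ≤ b) (hcd : c ≤ d) :
    overlap a b c d = max a (min b d) - max a (min b c) := by
  simp only [overlap, max_def, min_def]
  split_ifs <;> linarith

lemma sum_range_overlap {Z : ℕ → ℝ} (hZ : Monotone Z) (n : ℕ) (hab : a ≤ b)
    (h0 : Z 0 ≤ a) (hn : b ≤ Z n) :
    ∑ j ∈ range n, overlap a b (Z j) (Z (j + 1)) = b - a := by
  rw [sum_congr rfl fun j _ => overlap_eq_sub_clamp hab (hZ j.le_succ),
    sum_range_sub (fun k => max a (min b (Z k))), min_eq_left hn,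
    min_eq_right (h0.trans hab), max_eq_right hab, max_eq_left h0]

end Overlap

section PrefixSum

variable {n : ℕ} (x : Fin n → ℝ)

@[simp]
lemma psum_zero : psum x 0 = 0 := by simp [psum]

lemma psum_self : psum x n = ∑ i, x i := by simp [psum]

lemma psum_succ (i : Fin n) : psum x (i + 1) = psum x i + x i := by
  have : filter (fun j : Fin n => (j : ℕ) < i + 1) univ =
      insert i (filter (fun j : Fin n => (j : ℕ) < i) univ) := by
    ext j
    simp only [mem_filter, mem_univ, true_and, mem_insert, Fin.ext_iff]
    omega
  rw [psum, this, sum_insert (by simp), add_comm]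
  rfl

variable {x}

lemma psum_monotone (hx : ∀ i, 0 ≤ x i) : Monotone (psum x) := fun _ _ hkl =>
  sum_le_sum_of_subset_of_nonneg (monotone_filter_right _ fun _ _ h => h.trans_le hkl)
    fun i _ _ => hx i

lemma psum_nonneg (hx : ∀ i, 0 ≤ x i) (k : ℕ) : 0 ≤ psum x k := by
  simpa using psum_monotone hx k.zero_le

lemma Maj.psum_le {y : Fin n → ℝ} (h : Maj x y) {k : ℕ} (hk : k ≤ n) :
    psum x k ≤ psum y k := by
  rcases hk.lt_or_eq with hk | rfl
  · exact h.1 k hk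
  · rw [psum_self, psum_self, h.2]

end PrefixSum

def overlapPlan {n : ℕ} (x y : Fin n → ℝ) : Matrix (Fin n) (Fin n) ℝ := fun i j =>
  overlap (psum y i) (psum y (i + 1)) (psum x j) (psum x (j + 1))

section OverlapPlan

variable {n : ℕ} {x y : Fin n → ℝ}

lemma overlapPlan_nonneg (i j : Fin n) : 0 ≤ overlapPlan x y i j := overlap_nonneg

lemma sum_overlapPlan_row (hx : ∀ i, 0 ≤ x i) (hy : ∀ i, 0 ≤ y i)
    (hsum : ∑ i, x i = ∑ i, y i) (i : Fin n) : ∑ j, overlapPlan x y i j = y i := by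
  have hi : psum y i ≤ psum y (i + 1) := psum_monotone hy (Nat.le_succ _)
  have hn : psum y (i + 1) ≤ psum x n := by
    rw [psum_self, hsum, ← psum_self]
    exact psum_monotone hy i.isLt
  simp only [overlapPlan]
  rw [Fin.sum_univ_eq_sum_range (fun j => overlap _ _ (psum x j) (psum x (j + 1))),
    sum_range_overlap (psum_monotone hx) n hi (by simpa using psum_nonneg hy i) hn, psum_succ]
  ring

lemma sum_overlapPlan_col (hx : ∀ i, 0 ≤ x i) (hy : ∀ i, 0 ≤ y i) (hxy : Maj x y)
    (j : Fin n) : ∑ i, overlapPlan x y i j = x j := by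
  have hj : psum x j ≤ psum x (j + 1) := psum_monotone hx (Nat.le_succ _)
  have hn : psum x (j + 1) ≤ psum y n :=
    (hxy.psum_le j.isLt).trans (psum_monotone hy j.isLt)
  simp_rw [overlapPlan, overlap_comm (a := psum y _)]
  rw [Fin.sum_univ_eq_sum_range (fun i => overlap _ _ (psum y i) (psum y (i + 1))),
    sum_range_overlap (psum_monotone hy) n hj (by simpa using psum_nonneg hx j) hn, psum_succ]
  ring

lemma overlapPlan_eq_zero_of_lt (hy : ∀ i, 0 ≤ y i) (hxy : Maj x y) {i j : Fin n}
    (hji : j < i) : overlapPlan x y i j = 0 :=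
  overlap_eq_zero_of_le <| (hxy.psum_le j.isLt).trans (psum_monotone hy hji)

end OverlapPlan

lemma exists_upperRS_of_plan {n : ℕ} {x y : Fin n → ℝ} (T : Matrix (Fin n) (Fin n) ℝ)
    (hT : ∀ i j, 0 ≤ T i j) (hTt : ∀ i j, j < i → T i j = 0)
    (hrow : ∀ i, ∑ j, T i j = y i) (hcol : ∀ j, ∑ i, T i j = x j) :
    ∃ U, UpperRS U ∧ x = vecMul y U := by
  have hzero : ∀ i j, y i = 0 → T i j = 0 := fun i j hi =>
    (sum_eq_zero_iff_of_nonneg fun j _ => hT i j).1 ((hrow i).trans hi) j (mem_univ j)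
  refine ⟨fun i j => if y i = 0 then if i = j then 1 else 0 else T i j / y i,
    ⟨fun i j => ?_, fun i j hji => ?_, fun i => ?_⟩, funext fun j => ?_⟩
  · have : 0 ≤ y i := hrow i ▸ sum_nonneg fun j _ => hT i j
    dsimp only
    split_ifs
    exacts [by norm_num, by norm_num, div_nonneg (hT i j) this]
  · simp [hji.ne', hTt i j hji]
  · dsimp only
    split_ifs with hi
    · simp
    · rw [← sum_div, hrow, div_self hi]
  · simp only [← hcol, vecMul, dotProduct]
    refine sum_congr rfl fun i _ => ?_
    by_cases hi : y i = 0
    · simp [hi, hzero i j hi]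
    · simp [hi, mul_div_cancel₀]

section UpperRS

variable {n : ℕ} {U : Matrix (Fin n) (Fin n) ℝ}

lemma UpperRS.sum_vecMul (hU : UpperRS U) (y : Fin n → ℝ) :
    ∑ j, vecMul y U j = ∑ i, y i := by
  simp only [vecMul, dotProduct]
  rw [sum_comm]
  exact sum_congr rfl fun i _ => by rw [← mul_sum, hU.2.2 i, mul_one]

lemma UpperRS.psum_vecMul_le (hU : UpperRS U) {y : Fin n → ℝ} (hy : ∀ i, 0 ≤ y i) (k : ℕ) :
    psum (vecMul y U) k ≤ psum y k := by
  have hrow_le : ∀ i : Fin n, y i * ∑ j ∈ filter (fun j : Fin n => (j : ℕ) < k) univ, U i j ≤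
      if (i : ℕ) < k then y i else 0 := by
    intro i
    split_ifs with hik
    · refine mul_le_of_le_one_right (hy i) ((hU.2.2 i) ▸ ?_)
      exact sum_le_sum_of_subset_of_nonneg (filter_subset _ _) fun j _ _ => hU.1 i j
    · refine (mul_eq_zero_of_right _ (sum_eq_zero fun j hj => hU.2.1 i j ?_)).le
      simp only [mem_filter, mem_univ, true_and] at hj
      exact Fin.lt_def.2 (by omega)
  simp only [psum, vecMul, dotProduct]
  rw [sum_comm, sum_filter]
  exact sum_le_sum fun i _ => (mul_sum _ _ _).symm.le.trans (hrow_le i)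

lemma UpperRS.maj_vecMul (hU : UpperRS U) {y : Fin n → ℝ} (hy : ∀ i, 0 ≤ y i) :
    Maj (vecMul y U) y :=
  ⟨fun k _ => hU.psum_vecMul_le hy k, hU.sum_vecMul y⟩

end UpperRS

theorem stmt12_general {n : ℕ} (x y : Fin n → ℝ)
    (hx0 : ∀ i, 0 ≤ x i) (hy0 : ∀ i, 0 ≤ y i) :
    Maj x y ↔ ∃ U : Matrix (Fin n) (Fin n) ℝ, UpperRS U ∧ x = Matrix.vecMul y U := by
  constructor
  · intro hxy
    exact exists_upperRS_of_plan (overlapPlan x y) overlapPlan_nonneg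
      (fun i j => overlapPlan_eq_zero_of_lt hy0 hxy)
      (sum_overlapPlan_row hx0 hy0 hxy.2) (sum_overlapPlan_col hx0 hy0 hxy)
  · rintro ⟨U, hU, rfl⟩
    exact hU.maj_vecMul hy0

theorem stmt12 {n : ℕ} (x y : Fin n → ℝ)
    (hx0 : ∀ i, 0 ≤ x i) (hy0 : ∀ i, 0 ≤ y i)
    (hxs : Antitone x) (hys : Antitone y) :
    Maj x y ↔ ∃ U : Matrix (Fin n) (Fin n) ℝ, UpperRS U ∧ x = Matrix.vecMul y U :=
  stmt12_general x y hx0 hy0
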